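/- Let $\beta_1, \ldots, \beta_k < 0$, $\alpha_n \to \infty$ with $n e^{\alpha_n \beta_1} \to \lambda \in (0, \infty)$. Then $\sum_{j=0}^{n} j \binom{n}{j} e^{\alpha_n\beta_1 j + \sum_{p=2}^k \alpha_n \beta_p j^p / n^{p-1}} \to \lambda e^{\lambda}$ as $n \to \infty$. -/

import Mathlib

/-! With `t n = exp (α n * β 1)` the `j`-th summand is `j * C(n,j) * t n ^ j * exp (c n j)`, where
the correction `c n j ≤ 0` tends to `0` for fixed `j`, since `n * t n → λ > 0` forces
`α n = O(log n) = o(n)`. As `C(n,j) * t n ^ j → λ^j / j!` and the summands are dominated by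
`j * M^j / j!` for a bound `M` of `|n * t n|`, Tannery's theorem gives the limit
`∑ j, j * λ^j / j! = λ * exp λ`. -/

open Real Filter Finset Topology
open scoped Nat

theorem hasSum_nat_mul_pow_div_factorial (x : ℝ) :
    HasSum (fun j : ℕ => j * x ^ j / j !) (x * exp x) := by
  rw [← hasSum_nat_add_iff' 1, Real.exp_eq_exp_ℝ]
  simp only [range_one, sum_singleton, CharP.cast_eq_zero, zero_mul, zero_div, sub_zero]
  have h_shift (j : ℕ) : ((j + 1 : ℕ) : ℝ) * x ^ (j + 1) / (j + 1)! = x * (x ^ j / j !) := by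
    push_cast [Nat.factorial_succ]
    field_simp
    ring
  simpa only [h_shift] using (NormedSpace.expSeries_div_hasSum_exp x).mul_left x

theorem tendsto_sum_nat_mul_choose_mul_pow_mul {t : ℕ → ℝ} {lam : ℝ} {g : ℕ → ℕ → ℝ}
    (ht : Tendsto (fun n : ℕ => n * t n) atTop (𝓝 lam))
    (hg : ∀ j, Tendsto (g · j) atTop (𝓝 1))
    (hg_le : ∀ᶠ n in atTop, ∀ j, ‖g n j‖ ≤ 1) :
    Tendsto (fun n => ∑ j ∈ range (n + 1), j * n.choose j * t n ^ j * g n j) atTop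
      (𝓝 (lam * exp lam)) := by
  obtain ⟨M, hM⟩ := ht.norm.bddAbove_range
  have h_tsum (n : ℕ) : ∑ j ∈ range (n + 1), j * n.choose j * t n ^ j * g n j =
      ∑' j, j * n.choose j * t n ^ j * g n j :=
    (tsum_eq_sum fun j hj => by simp [Nat.choose_eq_zero_of_lt (by simpa using hj)]).symm
  simp_rw [h_tsum, ← (hasSum_nat_mul_pow_div_factorial lam).tsum_eq]
  refine tendsto_tsum_of_dominated_convergence (hasSum_nat_mul_pow_div_factorial M).summable
    (fun j => ?_) ?_
  · simpa [mul_assoc, mul_div_assoc] using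
      ((ProbabilityTheory.tendsto_choose_mul_pow_atTop j ht).const_mul (j : ℝ)).mul (hg j)
  · filter_upwards [hg_le] with n hn j
    calc ‖j * n.choose j * t n ^ j * g n j‖
        = j * n.choose j * ‖t n‖ ^ j * ‖g n j‖ := by simp [norm_mul, norm_pow]
      _ ≤ j * (n ^ j / j !) * ‖t n‖ ^ j * 1 := by
          gcongr
          exacts [Nat.choose_le_pow_div j n, hn j]
      _ = j * ‖n * t n‖ ^ j / j ! := by
          rw [norm_mul, mul_pow, Real.norm_natCast]; ring
      _ ≤ j * M ^ j / j ! := by gcongr; exact hM ⟨n, rfl⟩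

theorem tendsto_div_natCast_of_tendsto_natCast_mul_exp {a : ℕ → ℝ} {lam : ℝ} (hlam : 0 < lam)
    (h : Tendsto (fun n : ℕ => n * exp (a n)) atTop (𝓝 lam)) :
    Tendsto (fun n : ℕ => a n / n) atTop (𝓝 0) := by
  have h_log : Tendsto (fun n : ℕ => log n + a n) atTop (𝓝 (log lam)) := by
    refine ((continuousAt_log hlam.ne').tendsto.comp h).congr' ?_
    filter_upwards [eventually_ne_atTop 0] with n hn
    simp [log_mul (Nat.cast_ne_zero.mpr hn) (exp_ne_zero _)]
  have h_log_div : Tendsto (fun n : ℕ => log n / n) atTop (𝓝 0) := by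
    simpa [Function.comp_def] using
      (tendsto_pow_log_div_mul_add_atTop 1 0 1 one_ne_zero).comp tendsto_natCast_atTop_atTop
  simpa [add_div] using
    (h_log.div_atTop tendsto_natCast_atTop_atTop).sub h_log_div

theorem tendsto_sum_mul_pow_div_natCast_pow {a : ℕ → ℝ}
    (ha : Tendsto (fun n : ℕ => a n / n) atTop (𝓝 0)) (c : ℕ → ℝ) (k : ℕ) (x : ℝ) :
    Tendsto (fun n : ℕ => ∑ p ∈ Icc 2 k, a n * c p * x ^ p / (n : ℝ) ^ (p - 1)) atTop (𝓝 0) := by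
  rw [← sum_const_zero (s := Icc 2 k)]
  refine tendsto_finsetSum _ fun p hp => ?_
  have hp : 1 ≤ p - 1 := by have := (mem_Icc.mp hp).1; omega
  have h_div : Tendsto (fun n : ℕ => a n / (n : ℝ) ^ (p - 1)) atTop (𝓝 0) := by
    refine squeeze_zero_norm' ?_ (by simpa using ha.norm)
    filter_upwards [eventually_ge_atTop 1] with n hn
    have hn : (1 : ℝ) ≤ n := mod_cast hn
    rw [norm_div, norm_pow, Real.norm_natCast, Real.norm_eq_abs]
    gcongr
    exact le_self_pow₀ hn (by omega)
  have h_term := h_div.mul_const (c p * x ^ p)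
  rw [zero_mul] at h_term
  exact h_term.congr fun n => by ring

theorem stmt13 (k : ℕ) (hk : 1 ≤ k) (β : ℕ → ℝ)
    (hβ : ∀ p ∈ Finset.Icc 1 k, β p < 0)
    (α : ℕ → ℝ) (hα : Tendsto α atTop atTop)
    (lam : ℝ) (hlam : 0 < lam)
    (h : Tendsto (fun n : ℕ => (n : ℝ) * Real.exp (α n * β 1)) atTop (nhds lam)) :
    Tendsto (fun n : ℕ => ∑ j ∈ Finset.range (n + 1), (j : ℝ) * (n.choose j : ℝ) *
        Real.exp (α n * β 1 * j +
          ∑ p ∈ Finset.Icc 2 k, α n * β p * (j : ℝ) ^ p / (n : ℝ) ^ (p - 1)))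
      atTop (nhds (lam * Real.exp lam)) := by
  set corr : ℕ → ℕ → ℝ := fun n j => ∑ p ∈ Icc 2 k, α n * β p * (j : ℝ) ^ p / (n : ℝ) ^ (p - 1)
  have hβ1 : β 1 < 0 := hβ 1 (mem_Icc.mpr ⟨le_rfl, hk⟩)
  have hα_div : Tendsto (fun n : ℕ => α n / n) atTop (𝓝 0) := by
    simpa [mul_div_right_comm, hβ1.ne] using
      (tendsto_div_natCast_of_tendsto_natCast_mul_exp hlam h).div_const (β 1)
  have h_corr (j : ℕ) : Tendsto (fun n => exp (corr n j)) atTop (𝓝 1) := by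
    simpa using (tendsto_sum_mul_pow_div_natCast_pow hα_div β k j).rexp
  have h_corr_le : ∀ᶠ n in atTop, ∀ j, ‖exp (corr n j)‖ ≤ 1 := by
    filter_upwards [hα.eventually_ge_atTop 0] with n hαn j
    rw [norm_of_nonneg (exp_nonneg _), exp_le_one_iff]
    refine sum_nonpos fun p hp => div_nonpos_of_nonpos_of_nonneg ?_ (by positivity)
    have hβp : β p < 0 := hβ p (mem_Icc.mpr ⟨by grind, (mem_Icc.mp hp).2⟩)
    exact mul_nonpos_of_nonpos_of_nonneg (mul_nonpos_of_nonneg_of_nonpos hαn hβp.le) (by positivity)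
  refine (tendsto_sum_nat_mul_choose_mul_pow_mul h h_corr h_corr_le).congr fun n => ?_
  refine sum_congr rfl fun j _ => ?_
  rw [exp_add, mul_comm _ (j : ℝ), exp_nat_mul, mul_assoc _ (_ ^ j)]
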